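/- Let λ ≥ 0 and let M ∈ ℝ^{n×T} have singular value decomposition M = P·diag(v₁,…,v_q)·Qᵀ with v₁ ≥ … ≥ v_q ≥ 0. Then the singular value shrinkage matrix D_λ(M) = P·diag(max(v₁−λ,0),…,max(v_q−λ,0))·Qᵀ is a global minimizer over Π̃ ∈ ℝ^{n×T} of the function Π̃ ↦ ½‖M − Π̃‖_F² + λ‖Π̃‖_*. -/

import Mathlib

/-!
Put `D = P·diag(max(vⱼ - λ, 0))·Qᵀ` and `C = M - D = P·diag(min(vⱼ, λ))·Qᵀ`, and write
`⟨A, B⟩ = tr(AᵀB)`. For every `X`,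
`½‖M - X‖_F² = ½‖C‖_F² + ⟨C, D - X⟩ + ½‖D - X‖_F² ≥ ½‖C‖_F² + ⟨C, D⟩ - ⟨C, X⟩`.
Because `min(vⱼ, λ)·max(vⱼ - λ, 0) = λ·max(vⱼ - λ, 0)` we get `⟨C, D⟩ = λ‖D‖_*`, and because the
operator norm `‖C‖` is at most `λ`, the duality `⟨C, X⟩ ≤ ‖C‖·‖X‖_*` gives `⟨C, X⟩ ≤ λ‖X‖_*`.
Hence `½‖M - X‖_F² + λ‖X‖_* ≥ ½‖C‖_F² + λ‖D‖_*`, which is the value of the objective at `D`.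
The duality itself comes from evaluating the trace in an orthonormal eigenbasis `(uₖ)` of `XᵀX`:
`⟨C, X⟩ = Σₖ ⟨C uₖ, X uₖ⟩ ≤ ‖C‖·Σₖ ‖X uₖ‖` and `‖X uₖ‖` is the `k`-th singular value of `X`.
-/

open scoped BigOperators
open Matrix

/-- Frobenius norm of a real matrix. -/
noncomputable def frobeniusNorm {n T : ℕ} (A : Matrix (Fin n) (Fin T) ℝ) : ℝ :=
  Real.sqrt (∑ i, ∑ t, (A i t) ^ 2)

/-- Singular values of a real `n × T` matrix. -/
noncomputable def singularValues {n T : ℕ} (A : Matrix (Fin n) (Fin T) ℝ) :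
    Fin T → ℝ :=
  fun j => Real.sqrt ((show (Aᵀ * A).IsHermitian by
    simpa [Matrix.conjTranspose_eq_transpose_of_trivial] using
      Matrix.isHermitian_conjTranspose_mul_self A).eigenvalues j)

/-- Nuclear norm: sum of the singular values. -/
noncomputable def nuclearNorm {n T : ℕ} (A : Matrix (Fin n) (Fin T) ℝ) : ℝ :=
  ∑ j, singularValues A j

/-- A rectangular "diagonal" matrix with entries `v 0, v 1, …` on the diagonal. -/
noncomputable def rectDiagonal (n T : ℕ) (v : ℕ → ℝ) :
    Matrix (Fin n) (Fin T) ℝ :=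
  Matrix.of fun i t => if (i : ℕ) = (t : ℕ) then v i else 0

lemma frobeniusNorm_sq {n T : ℕ} (A : Matrix (Fin n) (Fin T) ℝ) :
    frobeniusNorm A ^ 2 = (Aᵀ * A).trace := by
  rw [frobeniusNorm, Real.sq_sqrt (by positivity), Finset.sum_comm]
  simp [Matrix.trace, Matrix.mul_apply, sq]

lemma frobeniusNorm_add_sq {n T : ℕ} (A E : Matrix (Fin n) (Fin T) ℝ) :
    frobeniusNorm (A + E) ^ 2 =
      frobeniusNorm A ^ 2 + 2 * (Aᵀ * E).trace + frobeniusNorm E ^ 2 := by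
  have h : (Eᵀ * A).trace = (Aᵀ * E).trace := by
    rw [← trace_transpose, transpose_mul, transpose_transpose]
  simp only [frobeniusNorm_sq, transpose_add, Matrix.add_mul, Matrix.mul_add, trace_add, h]
  ring

lemma nuclearNorm_nonneg {n T : ℕ} (A : Matrix (Fin n) (Fin T) ℝ) : 0 ≤ nuclearNorm A :=
  Finset.sum_nonneg fun _ _ => Real.sqrt_nonneg _

lemma trace_transpose_mul_orthogonal_conj {m n p q : Type*} [Fintype m] [Fintype n]
    [Fintype p] [Fintype q] [DecidableEq p] [DecidableEq q]
    {P : Matrix m p ℝ} {Q : Matrix n q ℝ} (hP : Pᵀ * P = 1) (hQ : Qᵀ * Q = 1)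
    (A B : Matrix p q ℝ) :
    ((P * A * Qᵀ)ᵀ * (P * B * Qᵀ)).trace = (Aᵀ * B).trace := by
  have h : (P * A * Qᵀ)ᵀ * (P * B * Qᵀ) = Q * (Aᵀ * (Pᵀ * P) * B) * Qᵀ := by
    simp only [transpose_mul, transpose_transpose, Matrix.mul_assoc]
  rw [h, trace_mul_cycle, hQ, hP, Matrix.one_mul, Matrix.mul_one]

lemma rectDiagonal_sub (n T : ℕ) (a b : ℕ → ℝ) :
    rectDiagonal n T a - rectDiagonal n T b = rectDiagonal n T (a - b) := by
  ext i t
  simp only [rectDiagonal, Matrix.sub_apply, of_apply, Pi.sub_apply]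
  split_ifs <;> ring

lemma rectDiagonal_transpose_mul (n T : ℕ) (a b : ℕ → ℝ) :
    (rectDiagonal n T a)ᵀ * rectDiagonal n T b =
      diagonal fun t : Fin T => if (t : ℕ) < n then a t * b t else 0 := by
  ext t t'
  simp only [rectDiagonal, mul_apply, transpose_apply, of_apply, diagonal_apply]
  rw [Fin.sum_univ_eq_sum_range (fun i => (if i = (t : ℕ) then a i else 0) *
    (if i = (t' : ℕ) then b i else 0))]
  simp only [ite_mul, zero_mul, Finset.sum_ite_eq', Finset.mem_range, Fin.val_inj]
  split_ifs <;> simp_all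

lemma trace_eq_sum_dotProduct_mulVec {n : Type*} [Fintype n] [DecidableEq n] (X : Matrix n n ℝ)
    (b : OrthonormalBasis n ℝ (EuclideanSpace ℝ n)) :
    X.trace = ∑ k, ⇑(b k) ⬝ᵥ X *ᵥ ⇑(b k) := by
  have h := LinearMap.trace_eq_sum_inner (toLin (PiLp.basisFun 2 ℝ n) (PiLp.basisFun 2 ℝ n) X) b
  rw [trace_toLin_eq] at h
  exact h.trans (Finset.sum_congr rfl fun k _ => inner_toEuclideanCLM X _ _)

lemma Matrix.IsHermitian.trace_cfc {n : Type*} [Fintype n] [DecidableEq n] {H : Matrix n n ℝ}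
    (hH : H.IsHermitian) (f : ℝ → ℝ) : (cfc f H).trace = ∑ i, f (hH.eigenvalues i) := by
  rw [hH.cfc_eq, IsHermitian.cfc, Unitary.conjStarAlgAut_apply, trace_mul_cycle,
    Unitary.coe_star_mul_self, Matrix.one_mul, trace_diagonal]
  rfl

open scoped MatrixOrder in
lemma nuclearNorm_eq_trace_of_mul_self {n T : ℕ} {A : Matrix (Fin n) (Fin T) ℝ}
    {S : Matrix (Fin T) (Fin T) ℝ} (hS : S.PosSemidef) (hSA : S * S = Aᵀ * A) :
    nuclearNorm A = S.trace := by
  have hA : (Aᵀ * A).PosSemidef := by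
    simpa [conjTranspose_eq_transpose_of_trivial] using posSemidef_conjTranspose_mul_self A
  have hsqrt : cfc Real.sqrt (Aᵀ * A) = S := by
    rw [← cfcₙ_eq_cfc (hf0 := Real.sqrt_zero), ← CFC.sqrt_eq_real_sqrt _ hA.nonneg]
    exact CFC.sqrt_unique hSA hS.nonneg
  rw [← hsqrt, hA.1.trace_cfc]
  rfl

lemma nuclearNorm_orthogonal_conj_rectDiagonal {n T : ℕ} {P : Matrix (Fin n) (Fin n) ℝ}
    {Q : Matrix (Fin T) (Fin T) ℝ} (hP : Pᵀ * P = 1) (hQ : Qᵀ * Q = 1) {d : ℕ → ℝ}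
    (hd : ∀ j, 0 ≤ d j) :
    nuclearNorm (P * rectDiagonal n T d * Qᵀ) = ∑ t : Fin T, if (t : ℕ) < n then d t else 0 := by
  set s : Fin T → ℝ := fun t => if (t : ℕ) < n then d t else 0
  have hS : (Q * diagonal s * Qᵀ).PosSemidef := by
    have hs : (diagonal s).PosSemidef :=
      posSemidef_diagonal_iff.2 fun t => by dsimp only [s]; split_ifs <;> simp [hd]
    simpa [conjTranspose_eq_transpose_of_trivial] using hs.mul_mul_conjTranspose_same Q
  have hss : diagonal s * diagonal s = (rectDiagonal n T d)ᵀ * rectDiagonal n T d := by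
    rw [diagonal_mul_diagonal, rectDiagonal_transpose_mul]
    congr 1
    funext t
    dsimp only [s]
    split_ifs <;> simp
  have hSD : Q * diagonal s * Qᵀ * (Q * diagonal s * Qᵀ) =
      (P * rectDiagonal n T d * Qᵀ)ᵀ * (P * rectDiagonal n T d * Qᵀ) :=
    calc Q * diagonal s * Qᵀ * (Q * diagonal s * Qᵀ)
        = Q * (diagonal s * (Qᵀ * Q) * diagonal s) * Qᵀ := by simp only [Matrix.mul_assoc]
      _ = Q * ((rectDiagonal n T d)ᵀ * (Pᵀ * P) * rectDiagonal n T d) * Qᵀ := by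
          rw [hQ, hP, Matrix.mul_one, Matrix.mul_one, hss]
      _ = _ := by simp only [transpose_mul, transpose_transpose, Matrix.mul_assoc]
  rw [nuclearNorm_eq_trace_of_mul_self hS hSD, trace_mul_cycle, hQ, Matrix.one_mul,
    trace_diagonal]

section L2OpNorm

open scoped Matrix.Norms.L2Operator

lemma l2_opNorm_mul_self_of_transpose_mul_self_eq_diagonal {m n : Type*} [Fintype m]
    [Fintype n] [DecidableEq n] {A : Matrix m n ℝ} {δ : n → ℝ} (h : Aᵀ * A = diagonal δ) :
    ‖A‖ * ‖A‖ = ‖δ‖ := by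
  rw [← l2_opNorm_conjTranspose_mul_self, conjTranspose_eq_transpose_of_trivial, h,
    l2_opNorm_diagonal]

lemma l2_opNorm_le_one_of_transpose_mul_self {m n : Type*} [Fintype m] [Fintype n]
    [DecidableEq n] {P : Matrix m n ℝ} (hP : Pᵀ * P = 1) : ‖P‖ ≤ 1 := by
  have h := l2_opNorm_mul_self_of_transpose_mul_self_eq_diagonal (hP.trans diagonal_one.symm)
  have : ‖fun _ : n => (1 : ℝ)‖ ≤ 1 := (pi_norm_le_iff_of_nonneg zero_le_one).2 fun _ => by simp
  nlinarith [norm_nonneg P]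

lemma l2_opNorm_orthogonal_conj_le {m n p q : Type*} [Fintype m] [Fintype n] [Fintype p]
    [Fintype q] [DecidableEq n] [DecidableEq p] [DecidableEq q]
    {P : Matrix m p ℝ} {Q : Matrix n q ℝ} (hP : Pᵀ * P = 1) (hQ : Qᵀ * Q = 1)
    (A : Matrix p q ℝ) : ‖P * A * Qᵀ‖ ≤ ‖A‖ := by
  have hQt : ‖Qᵀ‖ ≤ 1 := by
    rw [← conjTranspose_eq_transpose_of_trivial, l2_opNorm_conjTranspose]
    exact l2_opNorm_le_one_of_transpose_mul_self hQ
  calc ‖P * A * Qᵀ‖ ≤ ‖P‖ * ‖A‖ * ‖Qᵀ‖ :=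
        (l2_opNorm_mul _ _).trans (mul_le_mul_of_nonneg_right (l2_opNorm_mul _ _) (norm_nonneg _))
    _ ≤ 1 * ‖A‖ * 1 := by
        gcongr
        exact l2_opNorm_le_one_of_transpose_mul_self hP
    _ = ‖A‖ := by ring

lemma l2_opNorm_rectDiagonal_le {n T : ℕ} {a : ℕ → ℝ} {c : ℝ} (ha : ∀ j, |a j| ≤ c) :
    ‖rectDiagonal n T a‖ ≤ c := by
  have hc : 0 ≤ c := (abs_nonneg _).trans (ha 0)
  have h := l2_opNorm_mul_self_of_transpose_mul_self_eq_diagonal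
    (rectDiagonal_transpose_mul n T a a)
  have : ‖fun t : Fin T => if (t : ℕ) < n then a t * a t else 0‖ ≤ c * c := by
    refine (pi_norm_le_iff_of_nonneg (by positivity)).2 fun t => ?_
    split_ifs
    · rw [norm_mul, Real.norm_eq_abs]
      exact mul_le_mul (ha t) (ha t) (abs_nonneg _) hc
    · simpa using mul_nonneg hc hc
  exact (mul_self_le_mul_self_iff (norm_nonneg _) hc).2 (h ▸ this)

lemma trace_transpose_mul_le_l2_opNorm_mul_nuclearNorm {n T : ℕ}
    (C B : Matrix (Fin n) (Fin T) ℝ) : (Cᵀ * B).trace ≤ ‖C‖ * nuclearNorm B := by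
  have hB : (Bᵀ * B).IsHermitian := by
    simpa [conjTranspose_eq_transpose_of_trivial] using isHermitian_conjTranspose_mul_self B
  set u := hB.eigenvectorBasis
  have hu : ∀ k, ⇑(u k) ⬝ᵥ ⇑(u k) = 1 := fun k => by
    simpa [u.norm_eq_one] using
      (EuclideanSpace.inner_eq_star_dotProduct (u k) (u k)).symm.trans
        (real_inner_self_eq_norm_sq (u k))
  have hBu : ∀ k, ‖WithLp.toLp 2 (B *ᵥ u k)‖ = √(hB.eigenvalues k) := fun k => by
    rw [← Real.sqrt_sq (norm_nonneg _), ← real_inner_self_eq_norm_sq,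
      EuclideanSpace.inner_toLp_toLp, star_trivial]
    have : (B *ᵥ u k) ⬝ᵥ (B *ᵥ u k) = ⇑(u k) ⬝ᵥ (Bᵀ * B) *ᵥ ⇑(u k) := by
      simp only [← mulVec_mulVec, dotProduct_mulVec, vecMul_transpose]
    rw [this, hB.mulVec_eigenvectorBasis, dotProduct_smul, hu, smul_eq_mul, mul_one]
  have hterm : ∀ k, ⇑(u k) ⬝ᵥ (Cᵀ * B) *ᵥ ⇑(u k) ≤ ‖C‖ * √(hB.eigenvalues k) := fun k => by
    rw [← mulVec_mulVec, dotProduct_mulVec, vecMul_transpose, ← hBu k]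
    calc (C *ᵥ u k) ⬝ᵥ (B *ᵥ u k)
        ≤ ‖WithLp.toLp 2 (C *ᵥ u k)‖ * ‖WithLp.toLp 2 (B *ᵥ u k)‖ := by
          simpa [EuclideanSpace.inner_toLp_toLp, dotProduct_comm] using
            real_inner_le_norm (WithLp.toLp 2 (C *ᵥ u k)) (WithLp.toLp 2 (B *ᵥ u k))
      _ ≤ ‖C‖ * ‖WithLp.toLp 2 (B *ᵥ u k)‖ := by
          gcongr
          simpa [u.norm_eq_one] using l2_opNorm_mulVec C (u k)
  rw [trace_eq_sum_dotProduct_mulVec _ u, nuclearNorm, Finset.mul_sum]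
  exact Finset.sum_le_sum fun k _ => hterm k

lemma trace_transpose_mul_orthogonal_conj_rectDiagonal_le {n T : ℕ}
    {P : Matrix (Fin n) (Fin n) ℝ} {Q : Matrix (Fin T) (Fin T) ℝ} (hP : Pᵀ * P = 1)
    (hQ : Qᵀ * Q = 1) {a : ℕ → ℝ} {c : ℝ} (ha : ∀ j, |a j| ≤ c)
    (B : Matrix (Fin n) (Fin T) ℝ) :
    ((P * rectDiagonal n T a * Qᵀ)ᵀ * B).trace ≤ c * nuclearNorm B :=
  (trace_transpose_mul_le_l2_opNorm_mul_nuclearNorm _ B).trans <|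
    mul_le_mul_of_nonneg_right ((l2_opNorm_orthogonal_conj_le hP hQ _).trans
      (l2_opNorm_rectDiagonal_le ha)) (nuclearNorm_nonneg B)

end L2OpNorm

theorem singular_value_thresholding_general {n T : ℕ} (lam : ℝ) (hlam : 0 ≤ lam)
    (M : Matrix (Fin n) (Fin T) ℝ)
    (P : Matrix (Fin n) (Fin n) ℝ) (Q : Matrix (Fin T) (Fin T) ℝ)
    (v : ℕ → ℝ)
    (hP : Pᵀ * P = 1)
    (hQ : Qᵀ * Q = 1)
    (hv0 : ∀ j, 0 ≤ v j)
    (hM : M = P * rectDiagonal n T v * Qᵀ) :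
    ∀ Pt : Matrix (Fin n) (Fin T) ℝ,
      (1 / 2) * frobeniusNorm
            (M - P * rectDiagonal n T (fun j => max (v j - lam) 0) * Qᵀ) ^ 2 +
          lam * nuclearNorm
            (P * rectDiagonal n T (fun j => max (v j - lam) 0) * Qᵀ) ≤
        (1 / 2) * frobeniusNorm (M - Pt) ^ 2 + lam * nuclearNorm Pt := by
  intro X
  set d : ℕ → ℝ := fun j => max (v j - lam) 0
  set D := P * rectDiagonal n T d * Qᵀ
  set C := P * rectDiagonal n T (fun j => min (v j) lam) * Qᵀ
  have hMD : M - D = C := by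
    rw [hM, ← Matrix.sub_mul, ← Matrix.mul_sub, rectDiagonal_sub]
    congr
    funext j
    rcases le_total (v j) lam with h | h <;> simp [d, h]
  have hCD : (Cᵀ * D).trace = lam * nuclearNorm D := by
    rw [trace_transpose_mul_orthogonal_conj hP hQ, rectDiagonal_transpose_mul, trace_diagonal,
      nuclearNorm_orthogonal_conj_rectDiagonal hP hQ fun j => le_max_right _ _, Finset.mul_sum]
    refine Finset.sum_congr rfl fun t _ => ?_
    rcases le_total (v t) lam with h | h <;> simp [d, h]
  have hCX : (Cᵀ * X).trace ≤ lam * nuclearNorm X :=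
    trace_transpose_mul_orthogonal_conj_rectDiagonal_le hP hQ
      (fun j => abs_le.2 ⟨by linarith [le_min (hv0 j) hlam], min_le_right _ _⟩) X
  have hsplit : M - X = C + (D - X) := by rw [← hMD]; abel
  rw [hMD, hsplit, frobeniusNorm_add_sq, Matrix.mul_sub, trace_sub]
  nlinarith [sq_nonneg (frobeniusNorm (D - X))]

/-- singular value shrinkage / thresholding: let `λ ≥ 0` and let
`M = P·diag(v₁,…,v_q)·Qᵀ` be a singular value decomposition of `M ∈ ℝ^{n×T}`
(`P`, `Q` orthogonal, `v` nonnegative and decreasing).  Then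
`D_λ(M) = P·diag(max(v_j−λ,0))·Qᵀ` is a global minimizer over `Π̃` of
`Π̃ ↦ ½‖M − Π̃‖_F² + λ‖Π̃‖_*`. -/
theorem singular_value_thresholding {n T : ℕ} (lam : ℝ) (hlam : 0 ≤ lam)
    (M : Matrix (Fin n) (Fin T) ℝ)
    (P : Matrix (Fin n) (Fin n) ℝ) (Q : Matrix (Fin T) (Fin T) ℝ)
    (v : ℕ → ℝ)
    (hP : Pᵀ * P = 1) (hP' : P * Pᵀ = 1)
    (hQ : Qᵀ * Q = 1) (hQ' : Q * Qᵀ = 1)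
    (hv0 : ∀ j, 0 ≤ v j) (hvmono : ∀ j j', j ≤ j' → v j' ≤ v j)
    (hM : M = P * rectDiagonal n T v * Qᵀ) :
    ∀ Pt : Matrix (Fin n) (Fin T) ℝ,
      (1 / 2) * frobeniusNorm
            (M - P * rectDiagonal n T (fun j => max (v j - lam) 0) * Qᵀ) ^ 2 +
          lam * nuclearNorm
            (P * rectDiagonal n T (fun j => max (v j - lam) 0) * Qᵀ) ≤
        (1 / 2) * frobeniusNorm (M - Pt) ^ 2 + lam * nuclearNorm Pt :=
  singular_value_thresholding_general lam hlam M P Q v hP hQ hv0 hM
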